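/- Let r be a prime with r ≡ 2 (mod 3) and ε a non-square in F_r^×. Define G_3(r) = { A^3 : A ∈ C_ns(r) } ∪ { diag(1,-1)·A^3 : A ∈ C_ns(r) }. Then the intersection S(G_3(r)) = G_3(r) ∩ SL(2, F_r) has order 2(r+1)/3. -/

import Mathlib

/-! The non-split Cartan group `C_ns(r)` is the image of `𝔽_r[√ε]ˣ ≅ 𝔽_{r²}ˣ` under the regular
representation `a + b√ε ↦ !![a, ε b; b, a]`, and the determinant becomes the norm, which maps onto
`𝔽_rˣ`. Since `3 ∤ r - 1`, cubing permutes `𝔽_rˣ`, so the determinant is still onto from the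
subgroup of cubes, which has index 3 in the cyclic group `C_ns(r)`; hence each fibre of the
determinant on the cubes has `(r² - 1) / (3 (r - 1)) = (r + 1) / 3` elements. An element of
`G_3(r) ∩ SL_2` is either a cube of determinant `1` or `diag(1, -1)` times a cube of determinant
`-1`, and the two kinds never coincide because `diag(1, -1) ∉ C_ns(r)`. -/

open Polynomial

theorem MonoidHom.ncard_fiber_powRange_mul_card {G H : Type*} [CommGroup G] [Group H]
    (χ : G →* H) (hχ : Function.Surjective χ) {n : ℕ} (hn : (Nat.card H).Coprime n) (h : H) :
    {g | g ∈ (powMonoidHom n : G →* G).range ∧ χ g = h}.ncard * Nat.card H =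
      Nat.card (powMonoidHom n : G →* G).range := by
  set R := (powMonoidHom n : G →* G).range
  set χR := χ.comp R.subtype
  have hχR : Function.Surjective χR := fun h => by
    obtain ⟨y, rfl⟩ := (powCoprime hn).surjective h
    obtain ⟨x, rfl⟩ := hχ y
    exact ⟨⟨x ^ n, x, rfl⟩, by simp [χR]⟩
  have hfiber : {g | g ∈ R ∧ χ g = h} = Subtype.val '' (χR ⁻¹' {h}) := by
    ext g
    simp [χR, and_comm]
  rw [hfiber, Set.ncard_image_of_injective _ Subtype.val_injective, ← Nat.card_coe_set_eq,
    Nat.card_congr (MonoidHom.fiberEquivKerOfSurjective hχR h), ← Subgroup.card_top (G := H),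
    ← MonoidHom.range_eq_top.mpr hχR, ← Subgroup.index_ker, Subgroup.card_mul_index]

section CartanEmbedding

variable {K : Type*} [CommRing K] (ε : K)

noncomputable def cartanHom : AdjoinRoot (X ^ 2 - C ε) →ₐ[K] Matrix (Fin 2) (Fin 2) K :=
  Ideal.Quotient.liftₐ _ (aeval !![0, ε; 1, 0]) fun p hp => by
    obtain ⟨q, rfl⟩ := Ideal.mem_span_singleton'.mp hp
    have hJ : (!![0, ε; 1, 0] : Matrix (Fin 2) (Fin 2) K) ^ 2 = algebraMap K _ ε := by
      ext i j; fin_cases i <;> fin_cases j <;> simp [sq, Matrix.algebraMap_matrix_apply]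
    simp [hJ]

theorem cartanHom_of_add_of_mul_root (a b : K) :
    cartanHom ε (AdjoinRoot.of _ a + AdjoinRoot.of _ b * AdjoinRoot.root _) =
      !![a, ε * b; b, a] := by
  have hroot : cartanHom ε (AdjoinRoot.root _) = !![0, ε; 1, 0] := by
    rw [← AdjoinRoot.mk_X]
    exact aeval_X _
  rw [← AdjoinRoot.algebraMap_eq, map_add, map_mul, AlgHom.commutes, AlgHom.commutes, hroot,
    Algebra.algebraMap_eq_smul_one, Algebra.algebraMap_eq_smul_one, smul_mul_assoc, one_mul]
  ext i j; fin_cases i <;> fin_cases j <;> simp [mul_comm]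

theorem AdjoinRoot.exists_eq_of_add_of_mul_root [Nontrivial K] (x : AdjoinRoot (X ^ 2 - C ε)) :
    ∃ a b : K, x = AdjoinRoot.of _ a + AdjoinRoot.of _ b * AdjoinRoot.root _ := by
  have hmonic : (X ^ 2 - C ε).Monic := monic_X_pow_sub_C ε two_ne_zero
  obtain ⟨p, rfl⟩ := AdjoinRoot.mk_surjective x
  have hdeg : (p %ₘ (X ^ 2 - C ε)).natDegree ≤ 1 := by
    have := natDegree_modByMonic_lt p hmonic
      (fun h => by simpa [h] using natDegree_X_pow_sub_C (n := 2) (r := ε))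
    rw [natDegree_X_pow_sub_C] at this
    omega
  obtain ⟨b, a, hab⟩ := exists_eq_X_add_C_of_natDegree_le_one hdeg
  refine ⟨a, b, ?_⟩
  rw [← AdjoinRoot.mk_leftInverse hmonic (AdjoinRoot.mk _ p), AdjoinRoot.modByMonicHom_mk, hab]
  simp [add_comm]

theorem det_cartan (a b : K) : (!![a, ε * b; b, a]).det = a ^ 2 - ε * b ^ 2 := by
  rw [Matrix.det_fin_two_of]; ring

noncomputable def cartanDet : (AdjoinRoot (X ^ 2 - C ε))ˣ →* Kˣ :=
  Units.map (Matrix.detMonoidHom.comp (cartanHom ε).toRingHom.toMonoidHom)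

def nonsplitCartan : Set (Matrix (Fin 2) (Fin 2) K) :=
  {A | ∃ a b : K, (a, b) ≠ (0, 0) ∧ A = !![a, ε * b; b, a]}

def cartanCubesWithDet (c : K) : Set (Matrix (Fin 2) (Fin 2) K) :=
  {M | (∃ A ∈ nonsplitCartan ε, M = A ^ 3) ∧ M.det = c}

theorem setOf_cubes_or_diag_mul_cubes_det_eq_one :
    {M : Matrix (Fin 2) (Fin 2) K |
      ((∃ A ∈ nonsplitCartan ε, M = A ^ 3) ∨
        (∃ A ∈ nonsplitCartan ε, M = !![1, 0; 0, -1] * A ^ 3)) ∧ M.det = 1} =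
      cartanCubesWithDet ε 1 ∪ (!![1, 0; 0, -1] * ·) '' cartanCubesWithDet ε (-1) := by
  have hdet : (!![1, 0; 0, -1] : Matrix (Fin 2) (Fin 2) K).det = -1 := by simp
  ext M
  constructor
  · rintro ⟨⟨A, hA, rfl⟩ | ⟨A, hA, rfl⟩, h1⟩
    · exact Or.inl ⟨⟨A, hA, rfl⟩, h1⟩
    · refine Or.inr ⟨A ^ 3, ⟨⟨A, hA, rfl⟩, ?_⟩, rfl⟩
      rw [Matrix.det_mul, hdet] at h1
      linear_combination -h1
  · rintro (h | ⟨_, ⟨⟨A, hA, rfl⟩, h1⟩, rfl⟩)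
    · exact ⟨Or.inl h.1, h.2⟩
    · refine ⟨Or.inr ⟨A, hA, rfl⟩, ?_⟩
      rw [Matrix.det_mul, hdet, h1]
      ring

end CartanEmbedding

section Field

theorem irreducible_X_sq_sub_C {K : Type*} [Field K] {ε : K} (hε : ¬IsSquare ε) :
    Irreducible (X ^ 2 - C ε) :=
  X_pow_sub_C_irreducible_of_prime Nat.prime_two fun b hb => hε ⟨b, by rw [← hb, sq]⟩

variable {K : Type*} [Field K] (ε : K) [Fact (Irreducible (X ^ 2 - C ε))]

theorem range_cartanHom_units :
    Set.range (fun u : (AdjoinRoot (X ^ 2 - C ε))ˣ => cartanHom ε u) = nonsplitCartan ε := by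
  ext M
  constructor
  · rintro ⟨u, rfl⟩
    obtain ⟨a, b, hab⟩ := AdjoinRoot.exists_eq_of_add_of_mul_root ε (u : AdjoinRoot (X ^ 2 - C ε))
    refine ⟨a, b, ?_, by simp only [hab, cartanHom_of_add_of_mul_root]⟩
    rintro ⟨rfl, rfl⟩
    simp at hab
  · rintro ⟨a, b, hab, rfl⟩
    have hne : AdjoinRoot.of _ a + AdjoinRoot.of _ b * AdjoinRoot.root (X ^ 2 - C ε) ≠ 0 := by
      intro h
      have h' := congrArg (cartanHom ε) h
      rw [cartanHom_of_add_of_mul_root, map_zero] at h'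
      exact hab (Prod.ext (by simpa using congrFun (congrFun h' 0) 0)
        (by simpa using congrFun (congrFun h' 1) 0))
    exact ⟨Units.mk0 _ hne, cartanHom_of_add_of_mul_root ε a b⟩

theorem cartanHom_units_ne_diag_mul (h2 : (2 : K) ≠ 0) (u v : (AdjoinRoot (X ^ 2 - C ε))ˣ) :
    cartanHom ε u ≠ !![1, 0; 0, -1] * cartanHom ε v := by
  intro h
  have hD : cartanHom ε ↑(u * v⁻¹) = !![1, 0; 0, -1] := by
    rw [Units.val_mul, map_mul, h, mul_assoc, ← map_mul, Units.mul_inv, map_one, mul_one]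
  obtain ⟨a, b, hab⟩ := AdjoinRoot.exists_eq_of_add_of_mul_root ε ↑(u * v⁻¹)
  rw [hab, cartanHom_of_add_of_mul_root] at hD
  have h00 : a = 1 := by simpa using congrFun (congrFun hD 0) 0
  have h11 : a = -1 := by simpa using congrFun (congrFun hD 1) 1
  exact h2 (by linear_combination h11 - h00)

theorem disjoint_cartanCubesWithDet_diag_mul (h2 : (2 : K) ≠ 0) (c d : K) :
    Disjoint (cartanCubesWithDet ε c)
      ((!![1, 0; 0, -1] * ·) '' cartanCubesWithDet ε d) := by
  rw [Set.disjoint_left]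
  rintro _ ⟨⟨A, hA, rfl⟩, -⟩ ⟨_, ⟨⟨B, hB, rfl⟩, -⟩, hAB⟩
  rw [← range_cartanHom_units] at hA hB
  obtain ⟨u, rfl⟩ := hA
  obtain ⟨v, rfl⟩ := hB
  simp only [← map_pow, ← Units.val_pow_eq_pow_val] at hAB
  exact cartanHom_units_ne_diag_mul ε h2 (u ^ 3) (v ^ 3) hAB.symm

theorem cartanHom_units_injective :
    Function.Injective (fun u : (AdjoinRoot (X ^ 2 - C ε))ˣ => cartanHom ε u) :=
  fun _ _ h => Units.ext ((cartanHom ε).toRingHom.injective h)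

theorem cartanCubesWithDet_eq_image {c : K} (hc : c ≠ 0) :
    cartanCubesWithDet ε c = (fun u : (AdjoinRoot (X ^ 2 - C ε))ˣ => cartanHom ε u) ''
      {u | u ∈ (powMonoidHom 3 : _ →* _).range ∧ cartanDet ε u = Units.mk0 c hc} := by
  ext M
  simp only [cartanCubesWithDet, ← range_cartanHom_units, Set.mem_ofPred_eq, Set.mem_image,
    Set.mem_range]
  constructor
  · rintro ⟨⟨_, ⟨v, rfl⟩, rfl⟩, rfl⟩
    exact ⟨v ^ 3, ⟨⟨v, rfl⟩, Units.ext (by simp [cartanDet])⟩, by simp⟩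
  · rintro ⟨_, ⟨⟨v, rfl⟩, hdet⟩, rfl⟩
    refine ⟨⟨_, ⟨v, rfl⟩, by simp⟩, ?_⟩
    simpa [cartanDet, Units.ext_iff] using hdet

end Field

section FiniteField

variable {K : Type*} [Field K] [Fintype K] {ε : K}

theorem ringChar_ne_two_of_not_isSquare (hε : ¬IsSquare ε) : ringChar K ≠ 2 :=
  fun h => hε (FiniteField.isSquare_of_char_two h ε)

theorem exists_sq_sub_mul_sq_eq (hε : ¬IsSquare ε) (c : K) : ∃ a b : K, a ^ 2 - ε * b ^ 2 = c := by
  have hε0 : ε ≠ 0 := by rintro rfl; exact hε ⟨0, by simp⟩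
  have hf : (X ^ 2 - C c).degree = 2 := degree_X_pow_sub_C two_pos c
  have hg : (C (-ε) * X ^ 2).degree = 2 := by
    rw [degree_C_mul (neg_ne_zero.mpr hε0), degree_X_pow]; rfl
  obtain ⟨a, b, h⟩ := FiniteField.exists_root_sum_quadratic hf hg
    (FiniteField.odd_card_of_char_ne_two (ringChar_ne_two_of_not_isSquare hε))
  refine ⟨a, b, ?_⟩
  simp only [eval_sub, eval_pow, eval_X, eval_C, eval_mul] at h
  linear_combination h

variable [Fact (Irreducible (X ^ 2 - C ε))]

theorem cartanDet_surjective (hε : ¬IsSquare ε) : Function.Surjective (cartanDet ε) := by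
  intro c
  obtain ⟨a, b, hab⟩ := exists_sq_sub_mul_sq_eq hε c
  have hdet : (cartanHom ε (AdjoinRoot.of _ a + AdjoinRoot.of _ b * AdjoinRoot.root _)).det = c := by
    rw [cartanHom_of_add_of_mul_root, det_cartan, hab]
  have hne : AdjoinRoot.of _ a + AdjoinRoot.of _ b * AdjoinRoot.root (X ^ 2 - C ε) ≠ 0 := by
    rintro h
    rw [h, map_zero, Matrix.det_zero] at hdet
    exact c.ne_zero hdet.symm
  exact ⟨Units.mk0 _ hne, Units.ext hdet⟩

instance : Module.Finite K (AdjoinRoot (X ^ 2 - C ε)) :=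
  (AdjoinRoot.powerBasis (X_pow_sub_C_ne_zero two_pos ε)).finite

instance : Finite (AdjoinRoot (X ^ 2 - C ε)) := Module.finite_of_finite K

theorem natCard_adjoinRoot : Nat.card (AdjoinRoot (X ^ 2 - C ε)) = Fintype.card K ^ 2 := by
  rw [Module.natCard_eq_pow_finrank (K := K),
    (AdjoinRoot.powerBasis (X_pow_sub_C_ne_zero two_pos ε)).finrank, AdjoinRoot.powerBasis_dim,
    natDegree_X_pow_sub_C, Nat.card_eq_fintype_card]

theorem three_mul_ncard_cartanCubesWithDet (hε : ¬IsSquare ε) (hq : Fintype.card K % 3 = 2)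
    {c : K} (hc : c ≠ 0) : 3 * (cartanCubesWithDet ε c).ncard = Fintype.card K + 1 := by
  obtain ⟨m, hm⟩ : ∃ m, Fintype.card K = 3 * m + 2 := ⟨Fintype.card K / 3, by omega⟩
  have hcop : (Nat.card Kˣ).Coprime 3 := by
    rw [Nat.card_units, Nat.card_eq_fintype_card, hm, Nat.coprime_comm,
      Nat.Prime.coprime_iff_not_dvd Nat.prime_three]
    omega
  have key := (cartanDet ε).ncard_fiber_powRange_mul_card (cartanDet_surjective hε) hcop
    (Units.mk0 c hc)
  have hcube : (3 * m + 2) ^ 2 - 1 = 3 * ((3 * m + 1) * (m + 1)) := Nat.sub_eq_of_eq_add (by ring)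
  rw [IsCyclic.card_powMonoidHom_range, Nat.card_units, Nat.card_units, natCard_adjoinRoot,
    Nat.card_eq_fintype_card, hm, hcube, Nat.gcd_mul_right_left,
    Nat.mul_div_cancel_left _ three_pos,
    show 3 * m + 2 - 1 = 3 * m + 1 by omega, mul_comm (3 * m + 1)] at key
  rw [cartanCubesWithDet_eq_image ε hc,
    Set.ncard_image_of_injective _ (cartanHom_units_injective ε),
    Nat.eq_of_mul_eq_mul_right (by omega) key, hm]
  ring

end FiniteField

theorem stmt_8 (r : ℕ) [Fact r.Prime] (hr : r % 3 = 2)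
    (ε : ZMod r) (hε : ¬ IsSquare ε) :
    Set.ncard {M : Matrix (Fin 2) (Fin 2) (ZMod r) |
      ((∃ A : Matrix (Fin 2) (Fin 2) (ZMod r),
          (∃ a b : ZMod r, (a, b) ≠ (0, 0) ∧ A = !![a, ε * b; b, a]) ∧
          M = A ^ 3) ∨
       (∃ A : Matrix (Fin 2) (Fin 2) (ZMod r),
          (∃ a b : ZMod r, (a, b) ≠ (0, 0) ∧ A = !![a, ε * b; b, a]) ∧
          M = !![(1 : ZMod r), 0; 0, -1] * A ^ 3)) ∧
      M.det = 1} = 2 * (r + 1) / 3 := by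
  have : Fact (Irreducible (X ^ 2 - C ε)) := ⟨irreducible_X_sq_sub_C hε⟩
  have h2 : (2 : ZMod r) ≠ 0 := Ring.two_ne_zero (ringChar_ne_two_of_not_isSquare hε)
  have hq : Fintype.card (ZMod r) % 3 = 2 := by rwa [ZMod.card]
  have hdiag_inj : Function.Injective ((!![1, 0; 0, -1] : Matrix (Fin 2) (Fin 2) (ZMod r)) * ·) :=
    ((Matrix.isUnit_iff_isUnit_det _).mpr (by simp)).mul_right_injective
  erw [setOf_cubes_or_diag_mul_cubes_det_eq_one,
    Set.ncard_union_eq (disjoint_cartanCubesWithDet_diag_mul ε h2 1 (-1)),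
    Set.ncard_image_of_injective _ hdiag_inj]
  have h1 := three_mul_ncard_cartanCubesWithDet hε hq one_ne_zero
  have hm1 := three_mul_ncard_cartanCubesWithDet hε hq (neg_ne_zero.mpr one_ne_zero)
  rw [ZMod.card] at h1 hm1
  omega
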